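/- arXiv:math/0502464 — 7 statements merged into one kernel-verified Lean document; each statement's English description precedes it below -/
import Mathlib

section
/- If x ∈ ℂ with x ∉ [-2,2], then e^{-l(x)/2} = x·h(x), where l(x)/2 = cosh⁻¹(x/2). -/
/-- The principal square root of a complex number (nonnegative real part). -/
noncomputable def csqrt (z : ℂ) : ℂ := z ^ ((1 : ℂ) / 2)

/-- The principal inverse hyperbolic cosine, with nonnegative real part
and imaginary part in (-π, π]. -/
noncomputable def carccosh (z : ℂ) : ℂ :=
  Complex.log (z + csqrt (z - 1) * csqrt (z + 1))

/-- The function h(x) = (1 - sqrt(1 - 4/x²))/2. -/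
noncomputable def hfun (x : ℂ) : ℂ := (1 - csqrt (1 - 4 / x ^ 2)) / 2

open Complex Real

lemma csqrt_sq (z : ℂ) : csqrt z ^ 2 = z := by
  rcases eq_or_ne z 0 with rfl | hz
  · simp [csqrt]
  · rw [csqrt, sq, ← Complex.cpow_add _ _ hz]
    norm_num

lemma csqrt_re_pos {z : ℂ} (hz : z ≠ 0) (h : Complex.arg z ≠ Real.pi) :
    0 < (csqrt z).re := by
  rw [csqrt, Complex.cpow_def_of_ne_zero hz, Complex.exp_re]
  apply mul_pos (Real.exp_pos _)
  apply Real.cos_pos_of_mem_Ioo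
  have h1 : -Real.pi < Complex.arg z := Complex.neg_pi_lt_arg z
  have h2 : Complex.arg z < Real.pi := lt_of_le_of_ne (Complex.arg_le_pi z) h
  have him : (Complex.log z * (1 / 2)).im = Complex.arg z / 2 := by
    simp [Complex.mul_im, Complex.log_im]
    ring
  rw [him]
  constructor <;> [linarith; linarith]

theorem exp_neg_half_length (x : ℂ)
    (hx : x ∉ Complex.ofReal '' Set.Icc (-2 : ℝ) 2) :
    Complex.exp (-(carccosh (x / 2))) = x * hfun x := by
  -- x is not a real number in [-2,2]
  have hreal : ∀ r : ℝ, x = (r : ℂ) → ¬ (-2 ≤ r ∧ r ≤ 2) := by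
    rintro r rfl ⟨h1, h2⟩
    exact hx ⟨r, ⟨h1, h2⟩, rfl⟩
  have hx0 : x ≠ 0 := by
    intro h
    exact hreal 0 (by simp [h]) (by norm_num)
  set w : ℂ := x / 2 with hw
  have hw0 : w ≠ 0 := by simp [hw, hx0]
  have hwm1 : w - 1 ≠ 0 := by
    intro h
    have : x = ((2 : ℝ) : ℂ) := by
      have : w = 1 := by linear_combination h
      rw [hw] at this
      push_cast
      linear_combination 2 * this
    exact hreal 2 this (by norm_num)
  have hwp1 : w + 1 ≠ 0 := by
    intro h
    have : x = ((-2 : ℝ) : ℂ) := by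
      have : w = -1 := by linear_combination h
      rw [hw] at this
      push_cast
      linear_combination 2 * this
    exact hreal (-2) this (by norm_num)
  set a : ℂ := csqrt (w - 1) with ha
  set b : ℂ := csqrt (w + 1) with hb
  set s : ℂ := a * b with hs
  have ha2 : a ^ 2 = w - 1 := csqrt_sq _
  have hb2 : b ^ 2 = w + 1 := csqrt_sq _
  have hs2 : s ^ 2 = w ^ 2 - 1 := by
    rw [hs, mul_pow, ha2, hb2]; ring
  have hws : (w + s) * (w - s) = 1 := by linear_combination -hs2
  have hwsne : w + s ≠ 0 := by
    intro h
    rw [h, zero_mul] at hws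
    exact one_ne_zero hws.symm
  -- LHS
  have hL : Complex.exp (-(carccosh w)) = w - s := by
    rw [carccosh, ← ha, ← hb, ← hs, Complex.exp_neg, Complex.exp_log hwsne]
    exact inv_eq_of_mul_eq_one_right hws
  -- the c function
  set c : ℂ := csqrt (1 - 4 / x ^ 2) with hc
  have hcsq : c ^ 2 = 1 - 4 / x ^ 2 := csqrt_sq _
  have hwc2 : (w * c) ^ 2 = w ^ 2 - 1 := by
    have hx2 : x ^ 2 ≠ 0 := pow_ne_zero _ hx0
    rw [mul_pow, hcsq]
    field_simp [hw]
    ring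
  -- key positivity 1 : the real part of c is positive
  have hz0im : (1 - 4 / x ^ 2).im = 0 → 0 < (1 - 4 / x ^ 2).re := by
    intro him
    by_contra hre
    push_neg at hre
    -- then 1 - 4/x² is a nonpositive real, so x² is real in (0, 4]
    have hz : (1 - 4 / x ^ 2 : ℂ) = ((1 - 4 / x ^ 2).re : ℝ) := by
      exact Complex.ext (by simp) (by simp [him])
    have hx2 : (x ^ 2 : ℂ) ≠ 0 := pow_ne_zero _ hx0
    set r : ℝ := (1 - 4 / x ^ 2).re
    set q : ℝ := 4 / (1 - r) with hq
    have h1rR : (0 : ℝ) < 1 - r := by linarith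
    have hxsq : x ^ 2 = ((q : ℝ) : ℂ) := by
      have h1r : (1 : ℂ) - r = 4 / x ^ 2 := by linear_combination hz
      have h1rne : ((1 - r : ℝ) : ℂ) ≠ 0 := by
        exact_mod_cast ne_of_gt h1rR
      rw [hq, Complex.ofReal_div]
      rw [eq_div_iff (by push_cast; push_cast at h1rne; exact h1rne)]
      field_simp at h1r
      push_cast
      linear_combination h1r
    have hrlt : (0 : ℝ) < q ∧ q ≤ 4 := by
      constructor
      · rw [hq]; positivity
      · rw [hq, div_le_iff₀ h1rR]; nlinarith
    -- x² is a real in (0,4]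
    have him2 : x.re * x.im = 0 := by
      have := congrArg Complex.im hxsq
      simp [Complex.mul_im, Complex.ofReal_im, pow_two] at this
      linarith
    have hre2 : x.re ^ 2 - x.im ^ 2 = q := by
      have := congrArg Complex.re hxsq
      simp [Complex.mul_re, Complex.ofReal_re, pow_two] at this
      linarith [this]
    rcases mul_eq_zero.mp him2 with h | h
    · -- x purely imaginary : x² ≤ 0, contradiction
      rw [h] at hre2
      nlinarith [sq_nonneg x.im, hrlt.1]
    · -- x real with x² ≤ 4
      have : x = ((x.re : ℝ) : ℂ) := Complex.ext (by simp) (by simp [h])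
      apply hreal x.re this
      have : x.re ^ 2 ≤ 4 := by rw [h] at hre2; nlinarith [hrlt.2]
      constructor <;> nlinarith
  have hz0ne : (1 - 4 / x ^ 2 : ℂ) ≠ 0 := by
    intro h
    have := hz0im (by rw [h]; simp)
    rw [h] at this
    simp at this
  have hcre : 0 < c.re := by
    apply csqrt_re_pos hz0ne
    intro h
    obtain ⟨h1, h2⟩ := Complex.arg_eq_pi_iff.mp h
    linarith [hz0im h2]
  -- key positivity 2 : Re(conj w * s) > 0
  have hargs : -Real.pi < Complex.arg (w + 1) - Complex.arg (w - 1) ∧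
      Complex.arg (w + 1) - Complex.arg (w - 1) < Real.pi := by
    have him1 : (w - 1).im = x.im / 2 := by simp [hw]
    have him2 : (w + 1).im = x.im / 2 := by simp [hw]
    rcases lt_trichotomy x.im 0 with h | h | h
    · have a1 : Complex.arg (w - 1) < 0 := Complex.arg_neg_iff.mpr (by rw [him1]; linarith)
      have a2 : Complex.arg (w + 1) < 0 := Complex.arg_neg_iff.mpr (by rw [him2]; linarith)
      have b1 := Complex.neg_pi_lt_arg (w - 1)
      have b2 := Complex.neg_pi_lt_arg (w + 1)
      constructor <;> linarith
    · -- real case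
      have hxre : x = ((x.re : ℝ) : ℂ) := Complex.ext (by simp) (by simp [h])
      have : ¬ (-2 ≤ x.re ∧ x.re ≤ 2) := hreal x.re hxre
      push_neg at this
      have hwm : (w - 1) = ((x.re / 2 - 1 : ℝ) : ℂ) := by
        rw [hw, hxre]; push_cast; simp only [Complex.ofReal_re]
      have hwp : (w + 1) = ((x.re / 2 + 1 : ℝ) : ℂ) := by
        rw [hw, hxre]; push_cast; simp only [Complex.ofReal_re]
      rcases lt_or_ge x.re (-2) with h2 | h2
      · rw [hwm, hwp, Complex.arg_ofReal_of_neg (by linarith),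
          Complex.arg_ofReal_of_neg (by linarith)]
        simp [Real.pi_pos]
      · have h2' : 2 < x.re := this h2
        rw [hwm, hwp, Complex.arg_ofReal_of_nonneg (by linarith),
          Complex.arg_ofReal_of_nonneg (by linarith)]
        simp [Real.pi_pos]
    · have a1 : 0 ≤ Complex.arg (w - 1) := Complex.arg_nonneg_iff.mpr (by rw [him1]; linarith)
      have a2 : 0 ≤ Complex.arg (w + 1) := Complex.arg_nonneg_iff.mpr (by rw [him2]; linarith)
      have b1 : Complex.arg (w - 1) < Real.pi := by
        refine lt_of_le_of_ne (Complex.arg_le_pi _) ?_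
        intro hp
        have := (Complex.arg_eq_pi_iff.mp hp).2
        rw [him1] at this; linarith
      have b2 : Complex.arg (w + 1) < Real.pi := by
        refine lt_of_le_of_ne (Complex.arg_le_pi _) ?_
        intro hp
        have := (Complex.arg_eq_pi_iff.mp hp).2
        rw [him2] at this; linarith
      constructor <;> linarith
  set t : ℂ := (starRingEnd ℂ) a * b with ht
  have htre : 0 < t.re := by
    have haexp : a = Complex.exp (Complex.log (w - 1) * (1 / 2)) := by
      rw [ha, csqrt, Complex.cpow_def_of_ne_zero hwm1]
    have hbexp : b = Complex.exp (Complex.log (w + 1) * (1 / 2)) := by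
      rw [hb, csqrt, Complex.cpow_def_of_ne_zero hwp1]
    have : t = Complex.exp ((starRingEnd ℂ) (Complex.log (w - 1) * (1 / 2)) +
        Complex.log (w + 1) * (1 / 2)) := by
      rw [ht, haexp, hbexp, ← Complex.exp_conj, Complex.exp_add]
    rw [this, Complex.exp_re]
    apply mul_pos (Real.exp_pos _)
    apply Real.cos_pos_of_mem_Ioo
    have himcalc : ((starRingEnd ℂ) (Complex.log (w - 1) * (1 / 2)) +
        Complex.log (w + 1) * (1 / 2)).im
        = (Complex.arg (w + 1) - Complex.arg (w - 1)) / 2 := by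
      simp [Complex.add_im, Complex.mul_im, Complex.log_im]
      ring
    rw [himcalc]
    constructor <;> [linarith [hargs.1]; linarith [hargs.2]]
  have hws_re : 0 < ((starRingEnd ℂ) w * s).re := by
    have hwab : w = (a ^ 2 + b ^ 2) / 2 := by
      rw [ha2, hb2]; ring
    have key : (starRingEnd ℂ) w * s =
        (((Complex.normSq a : ℝ) : ℂ) * t + ((Complex.normSq b : ℝ) : ℂ) * (starRingEnd ℂ) t) / 2 := by
      rw [Complex.normSq_eq_conj_mul_self, Complex.normSq_eq_conj_mul_self]
      nth_rewrite 1 [hwab]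
      rw [hs, ht]
      simp only [map_div₀, map_add, map_pow, map_mul, Complex.conj_conj, map_ofNat]
      push_cast
      ring
    rw [key]
    have h2re : ∀ z : ℂ, (z / 2).re = z.re / 2 := by
      intro z
      have : z / 2 = z * ((1/2 : ℝ) : ℂ) := by push_cast; ring
      rw [this, Complex.mul_re]
      simp
      ring
    rw [h2re, Complex.add_re, Complex.re_ofReal_mul, Complex.re_ofReal_mul, Complex.conj_re]
    have hane : a ≠ 0 := by
      intro h; rw [h] at ha2; simp at ha2; exact hwm1 (by linear_combination -ha2)
    have hbne : b ≠ 0 := by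
      intro h; rw [h] at hb2; simp at hb2; exact hwp1 (by linear_combination -hb2)
    have hna' : 0 < Complex.normSq a := Complex.normSq_pos.mpr hane
    have hnb' : 0 < Complex.normSq b := Complex.normSq_pos.mpr hbne
    positivity
  -- now s = w * c
  have hswc : s = w * c := by
    have hfac : (s - w * c) * (s + w * c) = 0 := by
      linear_combination hs2 - hwc2
    rcases mul_eq_zero.mp hfac with h | h
    · linear_combination h
    · exfalso
      have hs' : s = -(w * c) := by linear_combination h
      rw [hs'] at hws_re
      have : (starRingEnd ℂ) w * -(w * c) = -(((Complex.normSq w : ℝ) : ℂ) * c) := by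
        rw [Complex.normSq_eq_conj_mul_self]
        push_cast
        ring
      rw [this] at hws_re
      rw [Complex.neg_re, Complex.re_ofReal_mul] at hws_re
      have hnw : 0 < Complex.normSq w := Complex.normSq_pos.mpr hw0
      nlinarith
  -- conclude
  rw [hL, hfun, ← hc, hswc, hw]
  ring
end

section
/- Let x, y, z, μ ∈ ℂ with x, y nonzero and x² + y² + z² - xyz = μ. If y' ∈ ℂ satisfies y + y' = xz with |y| ≥ |y'|, and z' ∈ ℂ satisfies z + z' = xy with |z| ≥ |z'|, then |x| ≤ 2. -/
theorem arrows_away_bound (μ x y z y' z' : ℂ)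
    (hx : x ≠ 0) (hy : y ≠ 0)
    (hmar : x ^ 2 + y ^ 2 + z ^ 2 - x * y * z = μ)
    (hy' : y + y' = x * z) (hyy' : ‖y'‖ ≤ ‖y‖)
    (hz' : z + z' = x * y) (hzz' : ‖z'‖ ≤ ‖z‖) :
    ‖x‖ ≤ 2 := by
  have h1 : ‖x‖ * ‖z‖ ≤ 2 * ‖y‖ := by
    calc ‖x‖ * ‖z‖ = ‖y + y'‖ := by
          rw [hy', norm_mul]
      _ ≤ ‖y‖ + ‖y'‖ := norm_add_le _ _
      _ ≤ 2 * ‖y‖ := by linarith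
  have h2 : ‖x‖ * ‖y‖ ≤ 2 * ‖z‖ := by
    calc ‖x‖ * ‖y‖ = ‖z + z'‖ := by
          rw [hz', norm_mul]
      _ ≤ ‖z‖ + ‖z'‖ := norm_add_le _ _
      _ ≤ 2 * ‖z‖ := by linarith
  have hyp : 0 < ‖y‖ := norm_pos_iff.mpr hy
  have hxnn : 0 ≤ ‖x‖ := norm_nonneg x
  have h3 : ‖x‖ * (‖x‖ * ‖y‖) ≤ 4 * ‖y‖ := by
    calc ‖x‖ * (‖x‖ * ‖y‖)
        ≤ ‖x‖ * (2 * ‖z‖) := by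
          exact mul_le_mul_of_nonneg_left h2 hxnn
      _ = 2 * (‖x‖ * ‖z‖) := by ring
      _ ≤ 2 * (2 * ‖y‖) := by linarith
      _ = 4 * ‖y‖ := by ring
  nlinarith [sq_nonneg (‖x‖ - 2)]
end

section
/- There exists a constant m(μ) > 0, depending only on μ ∈ ℂ, such that for any triple (x,y,z) ∈ ℂ³ with x² + y² + z² - xyz = μ, all of x, y, z nonzero, and the vertex being a sink — i.e. |yz - x| ≤ |x|, |xz - y| ≤ |y|, and |xy - z| ≤ |z| — one has min{|x|, |y|, |z|} ≤ m(μ). -/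
/-! At a sink the largest coordinate, say `z`, satisfies `‖z‖ ≤ ‖xy - z‖`. Since
`z (xy - z) = x² + y² - μ` on the Markoff surface, this gives
`‖x‖‖y‖‖z‖ ≤ ‖z (xy - z)‖ + ‖z‖² ≤ 2 ‖x² + y² - μ‖ ≤ 2 (‖x‖² + ‖y‖² + ‖μ‖)`.
If `‖x‖ ≤ ‖y‖ ≤ ‖z‖`, the left side is at least `‖x‖‖y‖²` and the right side at most
`4‖y‖² + 2‖μ‖`, which forces `‖x‖ ≤ ‖μ‖ + 5`. -/

lemma norm_mul_mul_le_of_norm_le_norm_mul_sub {𝕜 : Type*} [NormedField 𝕜] {μ x y z : 𝕜}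
    (h : x ^ 2 + y ^ 2 + z ^ 2 - x * y * z = μ) (hz : ‖z‖ ≤ ‖x * y - z‖) :
    ‖x‖ * ‖y‖ * ‖z‖ ≤ 2 * (‖x‖ ^ 2 + ‖y‖ ^ 2 + ‖μ‖) := by
  have hvieta : z * (x * y - z) = x ^ 2 + y ^ 2 - μ := by linear_combination -h
  have hsq : ‖z‖ ^ 2 ≤ ‖x ^ 2 + y ^ 2 - μ‖ := by
    rw [← hvieta, norm_mul, sq]
    exact mul_le_mul_of_nonneg_left hz (norm_nonneg z)
  have htri : ‖x ^ 2 + y ^ 2 - μ‖ ≤ ‖x‖ ^ 2 + ‖y‖ ^ 2 + ‖μ‖ := by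
    calc ‖x ^ 2 + y ^ 2 - μ‖ ≤ ‖x ^ 2‖ + ‖y ^ 2‖ + ‖μ‖ :=
          (norm_sub_le _ _).trans (add_le_add_left (norm_add_le _ _) _)
      _ = ‖x‖ ^ 2 + ‖y‖ ^ 2 + ‖μ‖ := by rw [norm_pow, norm_pow]
  calc ‖x‖ * ‖y‖ * ‖z‖ = ‖z * (x * y - z) + z ^ 2‖ := by
        rw [show z * (x * y - z) + z ^ 2 = x * y * z by ring, norm_mul, norm_mul]
    _ ≤ ‖z * (x * y - z)‖ + ‖z ^ 2‖ := norm_add_le _ _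
    _ = ‖x ^ 2 + y ^ 2 - μ‖ + ‖z‖ ^ 2 := by rw [hvieta, norm_pow]
    _ ≤ 2 * (‖x‖ ^ 2 + ‖y‖ ^ 2 + ‖μ‖) := by linarith

lemma min_le_add_five_of_mul_mul_le {K a b c : ℝ} (hK : 0 ≤ K) (ha : 0 ≤ a) (hb : 0 ≤ b)
    (hac : a ≤ c) (hbc : b ≤ c) (h : a * b * c ≤ 2 * (a ^ 2 + b ^ 2 + K)) :
    min a b ≤ K + 5 := by
  wlog hab : a ≤ b generalizing a b
  · rw [min_comm]
    exact this hb ha hbc hac (by linarith) (le_of_not_ge hab)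
  rw [min_eq_left hab]
  by_contra! hlarge
  have hbb : a * b * b ≤ a * b * c := mul_le_mul_of_nonneg_left hbc (mul_nonneg ha hb)
  nlinarith [mul_le_mul hab hab ha hb]

lemma min_min_le_add_five_of_mul_mul_le {K a b c : ℝ} (hK : 0 ≤ K)
    (ha : 0 ≤ a) (hb : 0 ≤ b) (hc : 0 ≤ c)
    (hA : a * b * c ≤ 2 * (b ^ 2 + c ^ 2 + K))
    (hB : a * b * c ≤ 2 * (a ^ 2 + c ^ 2 + K))
    (hC : a * b * c ≤ 2 * (a ^ 2 + b ^ 2 + K)) :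
    min a (min b c) ≤ K + 5 := by
  have hcmax : a ≤ c → b ≤ c → min a (min b c) ≤ K + 5 := fun hac hbc =>
    (min_le_min_left a (min_le_left b c)).trans
      (min_le_add_five_of_mul_mul_le hK ha hb hac hbc hC)
  have hbmax : a ≤ b → c ≤ b → min a (min b c) ≤ K + 5 := fun hab hcb =>
    (min_le_min_left a (min_le_right b c)).trans
      (min_le_add_five_of_mul_mul_le hK ha hc hab hcb (by linarith))
  have hamax : b ≤ a → c ≤ a → min a (min b c) ≤ K + 5 := fun hba hca =>
    (min_le_right a _).trans (min_le_add_five_of_mul_mul_le hK hb hc hba hca (by linarith))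
  rcases le_total a b with hab | hba
  · rcases le_total b c with hbc | hcb
    exacts [hcmax (hab.trans hbc) hbc, hbmax hab hcb]
  · rcases le_total a c with hac | hca
    exacts [hcmax hac (hba.trans hac), hamax hba hca]

theorem sink_bound (μ : ℂ) :
    ∃ m : ℝ, 0 < m ∧ ∀ x y z : ℂ,
      x ≠ 0 → y ≠ 0 → z ≠ 0 →
      x ^ 2 + y ^ 2 + z ^ 2 - x * y * z = μ →
      ‖x‖ ≤ ‖y * z - x‖ →
      ‖y‖ ≤ ‖x * z - y‖ →
      ‖z‖ ≤ ‖x * y - z‖ →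
      min ‖x‖ (min ‖y‖ ‖z‖) ≤ m := by
  refine ⟨‖μ‖ + 5, by positivity, fun x y z _ _ _ h hx hy hz => ?_⟩
  refine min_min_le_add_five_of_mul_mul_le (norm_nonneg μ) (norm_nonneg x) (norm_nonneg y)
    (norm_nonneg z) ?_ ?_ (norm_mul_mul_le_of_norm_le_norm_mul_sub h hz)
  · have hyzx : y ^ 2 + z ^ 2 + x ^ 2 - y * z * x = μ := by linear_combination h
    linarith [norm_mul_mul_le_of_norm_le_norm_mul_sub hyzx hx]
  · have hxzy : x ^ 2 + z ^ 2 + y ^ 2 - x * z * y = μ := by linear_combination h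
    linarith [norm_mul_mul_le_of_norm_le_norm_mul_sub hxzy hy]
end

section
/- Let (x,y,z) ∈ ℂ³ with x² + y² + z² - xyz = μ. Then log⁺|z| ≤ log 4 + log⁺|μ| + log⁺|x| + log⁺|y|, where log⁺ t = max{0, log t} for t > 0 (and log⁺ 0 := 0). -/
/-!
Solving the Markoff equation for `z²` and taking norms gives
`|z|² ≤ |μ| + |x|² + |y|² + |x||y||z|`. Every coefficient on the right is at most
`K = max 1 |μ| · max 1 |x| · max 1 |y|`, and a real `c > 4K` makes `c²` dominate such a
right-hand side, so `|z| ≤ 4K`; taking `log⁺` turns this product bound into the sum bound.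
-/

/-- log⁺ t = max {0, log t}, with log⁺ 0 = 0. -/
noncomputable def logPlus (t : ℝ) : ℝ := max 0 (Real.log t)

open Real

theorem norm_sq_le_of_markoff {𝕜 : Type*} [NormedField 𝕜] {μ x y z : 𝕜}
    (h : x ^ 2 + y ^ 2 + z ^ 2 - x * y * z = μ) :
    ‖z‖ ^ 2 ≤ ‖μ‖ + ‖x‖ ^ 2 + ‖y‖ ^ 2 + ‖x‖ * ‖y‖ * ‖z‖ := by
  have hz : z ^ 2 = μ - x ^ 2 - y ^ 2 + x * y * z := by linear_combination h
  calc ‖z‖ ^ 2 = ‖μ - x ^ 2 - y ^ 2 + x * y * z‖ := by rw [← norm_pow, hz]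
    _ ≤ ‖μ‖ + ‖x ^ 2‖ + ‖y ^ 2‖ + ‖x * y * z‖ := by
      grw [norm_add_le, norm_sub_le, norm_sub_le]
    _ = ‖μ‖ + ‖x‖ ^ 2 + ‖y‖ ^ 2 + ‖x‖ * ‖y‖ * ‖z‖ := by simp only [norm_pow, norm_mul]

theorem le_four_mul_of_sq_le {m a b c M X Y : ℝ} (ha : 0 ≤ a) (hb : 0 ≤ b)
    (hM : 1 ≤ M) (hX : 1 ≤ X) (hY : 1 ≤ Y) (hmM : m ≤ M) (haX : a ≤ X) (hbY : b ≤ Y)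
    (hc : c ^ 2 ≤ m + a ^ 2 + b ^ 2 + a * b * c) : c ≤ 4 * (M * X * Y) := by
  have hXY1 : 1 ≤ X * Y := one_le_mul_of_one_le_of_one_le hX hY
  have hMK : M ≤ M * X * Y := by
    rw [mul_assoc]; exact le_mul_of_one_le_right (by linarith) hXY1
  have hXYK : X * Y ≤ M * X * Y := by
    rw [mul_assoc]; exact le_mul_of_one_le_left (by linarith) hM
  have hXK : X ≤ M * X * Y := (le_mul_of_one_le_right (by linarith) hY).trans hXYK
  have hYK : Y ≤ M * X * Y := (le_mul_of_one_le_left (by linarith) hX).trans hXYK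
  have habK : a * b ≤ M * X * Y := (mul_le_mul haX hbY hb (by linarith)).trans hXYK
  generalize M * X * Y = K at *
  by_contra! hlt
  have hc0 : 0 ≤ c := by linarith
  have ha2 : a ^ 2 ≤ K ^ 2 := pow_le_pow_left₀ ha (haX.trans hXK) 2
  have hb2 : b ^ 2 ≤ K ^ 2 := pow_le_pow_left₀ hb (hbY.trans hYK) 2
  have habc : a * b * c ≤ K * c := mul_le_mul_of_nonneg_right habK hc0
  nlinarith

theorem posLog_max_one {t : ℝ} (ht : 0 ≤ t) : log⁺ (max 1 t) = log⁺ t := by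
  rw [posLog_eq_log_max_one ht, posLog_eq_log ((le_max_left 1 t).trans (le_abs_self _))]

theorem upper_fibonacci_bound (μ x y z : ℂ)
    (h : x ^ 2 + y ^ 2 + z ^ 2 - x * y * z = μ) :
    logPlus ‖z‖ ≤
      Real.log 4 + logPlus ‖μ‖ + logPlus ‖x‖ +
        logPlus ‖y‖ := by
  have hz : ‖z‖ ≤ 4 * (max 1 ‖μ‖ * max 1 ‖x‖ * max 1 ‖y‖) :=
    le_four_mul_of_sq_le (norm_nonneg x) (norm_nonneg y) (le_max_left _ _) (le_max_left _ _)
      (le_max_left _ _) (le_max_right _ _) (le_max_right _ _) (le_max_right _ _)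
      (norm_sq_le_of_markoff h)
  change log⁺ ‖z‖ ≤ log 4 + log⁺ ‖μ‖ + log⁺ ‖x‖ + log⁺ ‖y‖
  calc log⁺ ‖z‖ ≤ log⁺ ((4 : ℕ) * (max 1 ‖μ‖ * max 1 ‖x‖ * max 1 ‖y‖)) := by
        exact_mod_cast posLog_le_posLog (norm_nonneg z) hz
    _ ≤ log 4 + (log⁺ (max 1 ‖μ‖) + log⁺ (max 1 ‖x‖) + log⁺ (max 1 ‖y‖)) := by
        grw [posLog_nat_mul, posLog_mul, posLog_mul]; norm_num
    _ = log 4 + log⁺ ‖μ‖ + log⁺ ‖x‖ + log⁺ ‖y‖ := by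
        simp only [posLog_max_one, norm_nonneg, add_assoc]
end

section
/- Let x ∈ ℂ with x ∉ {±2} and x² ≠ μ, let λ be a root of λ² - xλ + 1 = 0, and suppose a bi-infinite sequence (yₙ) satisfies the recursion yₙ₊₁ = x·yₙ - yₙ₋₁ together with the constraint that (x, yₙ, yₙ₊₁) is a μ-Markoff triple for all n. Then there exist constants A, B ∈ ℂ with AB = (x² - μ)/(x² - 4) such that yₙ = Aλⁿ + Bλ⁻ⁿ for all n ∈ ℤ. -/
/-! Writing `x = λ + λ⁻¹`, the recursion is the linear recurrence with characteristic roots `λ, λ⁻¹`,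
which are distinct because `x ≠ ±2`; so `yₙ = Aλⁿ + Bλ⁻ⁿ`, with `A, B` fitted to `y₀, y₁`.
For such a sequence `yₙ² + yₙ₊₁² - x yₙ yₙ₊₁ = -(x² - 4)AB`, and the Markoff equation at `n = 0`
turns this into `AB = (x² - μ)/(x² - 4)`. -/

theorem eq_of_recurrence_of_eq_zero_one {R : Type*} [Ring R] {x : R} {y z : ℤ → R}
    (hy : ∀ n, y (n + 1) = x * y n - y (n - 1)) (hz : ∀ n, z (n + 1) = x * z n - z (n - 1))
    (h0 : y 0 = z 0) (h1 : y 1 = z 1) : y = z := by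
  suffices h : ∀ n : ℤ, y n = z n ∧ y (n + 1) = z (n + 1) from funext fun n => (h n).1
  intro n
  induction n using Int.induction_on with
  | zero => exact ⟨h0, by simpa using h1⟩
  | succ k ih =>
    refine ⟨ih.2, ?_⟩
    rw [hy, hz, add_sub_cancel_right, ih.1, ih.2]
  | pred k ih =>
    have hy' := hy (-k)
    have hz' := hz (-k)
    rw [sub_add_cancel]
    refine ⟨?_, ih.1⟩
    rw [eq_sub_iff_add_eq, ← eq_sub_iff_add_eq'] at hy' hz'
    rw [hy', hz', ih.1, ih.2]

section Field

variable {K : Type*} [Field K]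

theorem geometric_comb_recurrence {l : K} (hl : l ≠ 0) (A B : K) (n : ℤ) :
    A * l ^ (n + 1) + B * l ^ (-(n + 1)) =
      (l + l⁻¹) * (A * l ^ n + B * l ^ (-n)) - (A * l ^ (n - 1) + B * l ^ (-(n - 1))) := by
  simp only [zpow_add₀ hl, zpow_sub₀ hl, neg_add, neg_sub, zpow_one, zpow_neg]
  field_simp
  ring

theorem ne_zero_and_eq_add_inv_of_quadratic {x l : K} (hl : l ^ 2 - x * l + 1 = 0) :
    l ≠ 0 ∧ x = l + l⁻¹ := by
  have hl0 : l ≠ 0 := by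
    rintro rfl
    norm_num at hl
  refine ⟨hl0, ?_⟩
  field_simp
  linear_combination -hl

theorem sub_inv_sq_eq_add_inv_sq_sub_four {l : K} (hl : l ≠ 0) :
    (l - l⁻¹) ^ 2 = (l + l⁻¹) ^ 2 - 4 := by
  field_simp
  ring

theorem exists_add_eq_and_mul_add_mul_eq {u v : K} (huv : u ≠ v) (a b : K) :
    ∃ A B : K, A + B = a ∧ A * u + B * v = b := by
  have h : u - v ≠ 0 := sub_ne_zero.mpr huv
  refine ⟨(b - a * v) / (u - v), (a * u - b) / (u - v), ?_, ?_⟩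
  · field_simp
    ring
  · field_simp
    ring

theorem geometric_comb_markoff_form (l A B : K) (hl : l ≠ 0) :
    (A + B) ^ 2 + (A * l + B * l⁻¹) ^ 2 - (l + l⁻¹) * (A + B) * (A * l + B * l⁻¹) =
      -((l + l⁻¹) ^ 2 - 4) * (A * B) := by
  field_simp
  ring

end Field

theorem neighbor_sequence_form_general (μ x l : ℂ) (y : ℤ → ℂ)
    (hx2 : x ≠ 2) (hx2' : x ≠ -2)
    (hl : l ^ 2 - x * l + 1 = 0)
    (hrec : ∀ n : ℤ, y (n + 1) = x * y n - y (n - 1))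
    (hmar : ∀ n : ℤ,
      x ^ 2 + (y n) ^ 2 + (y (n + 1)) ^ 2 - x * y n * y (n + 1) = μ) :
    ∃ A B : ℂ, A * B = (x ^ 2 - μ) / (x ^ 2 - 4) ∧
      ∀ n : ℤ, y n = A * l ^ n + B * l ^ (-n) := by
  obtain ⟨hl0, rfl⟩ := ne_zero_and_eq_add_inv_of_quadratic hl
  have hx4 : (l + l⁻¹) ^ 2 - 4 ≠ 0 := by
    rw [sub_ne_zero, show (4 : ℂ) = 2 ^ 2 by norm_num, Ne, sq_eq_sq_iff_eq_or_eq_neg]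
    exact not_or.mpr ⟨hx2, hx2'⟩
  have hsep : l ≠ l⁻¹ := by
    intro h
    apply hx4
    rw [← sub_inv_sq_eq_add_inv_sq_sub_four hl0, ← h, sub_self, zero_pow two_ne_zero]
  obtain ⟨A, B, h0, h1⟩ := exists_add_eq_and_mul_add_mul_eq hsep (y 0) (y 1)
  refine ⟨A, B, ?_, congrFun (eq_of_recurrence_of_eq_zero_one
    (z := fun n => A * l ^ n + B * l ^ (-n)) hrec (geometric_comb_recurrence hl0 A B)
    (by simp [h0]) (by simp [h1]))⟩
  rw [eq_div_iff hx4]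
  have hm := hmar 0
  rw [zero_add, ← h0, ← h1] at hm
  linear_combination -hm + geometric_comb_markoff_form l A B hl0

theorem neighbor_sequence_form (μ x l : ℂ) (y : ℤ → ℂ)
    (hx2 : x ≠ 2) (hx2' : x ≠ -2) (hxμ : x ^ 2 ≠ μ)
    (hl : l ^ 2 - x * l + 1 = 0)
    (hrec : ∀ n : ℤ, y (n + 1) = x * y n - y (n - 1))
    (hmar : ∀ n : ℤ,
      x ^ 2 + (y n) ^ 2 + (y (n + 1)) ^ 2 - x * y n * y (n + 1) = μ) :
    ∃ A B : ℂ, A * B = (x ^ 2 - μ) / (x ^ 2 - 4) ∧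
      ∀ n : ℤ, y n = A * l ^ n + B * l ^ (-n) :=
  neighbor_sequence_form_general μ x l y hx2 hx2' hl hrec hmar
end

section
/- Let x ∈ ℂ with |λ| > 1 where λ = (x/2)(1 + sqrt(1 - 4/x²)) (principal square root), let A, B ∈ ℂ with sqrt(|AB|)/|λ| ≤ |A|, |B| ≤ sqrt(|AB|)·|λ|, and set yₙ = Aλⁿ + Bλ⁻ⁿ. If n > 0 and |λ|^{2n-1} ≥ (|λ|+1)/(|λ|-1), then |yₙ₊₁| ≥ |yₙ| and |y₋ₙ₋₁| ≥ |y₋ₙ|. -/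
/-!
By the triangle inequality, `‖A lⁿ + B l⁻ⁿ‖ ≤ a P + b / P` and
`‖A lⁿ⁺¹ + B l⁻⁽ⁿ⁺¹⁾‖ ≥ a P L - b / (P L)`, where `L = ‖l‖`, `P = Lⁿ`, `a = ‖A‖`, `b = ‖B‖`.
The gap between the two bounds has the sign of `a P² L (L - 1) - b (L + 1)`, and the balance
conditions `s / L ≤ a`, `b ≤ s L` reduce its nonnegativity to `L (L + 1) ≤ P² (L - 1)`, which is
the hypothesis `L^(2n-1) ≥ (L + 1) / (L - 1)`.
-/

lemma add_div_le_sub_div_of_balanced {L a b s P : ℝ} (hL : 1 < L) (hs : 0 ≤ s) (hP : 0 < P)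
    (ha : s / L ≤ a) (hb : b ≤ s * L) (hLP : L * (L + 1) ≤ P ^ 2 * (L - 1)) :
    a * P + b / P ≤ a * (P * L) - b / (P * L) := by
  have hL0 : 0 < L := by linarith
  have hkey : b * (L + 1) ≤ a * P ^ 2 * L * (L - 1) :=
    calc b * (L + 1) ≤ s * (L * (L + 1)) := by nlinarith
      _ ≤ s * (P ^ 2 * (L - 1)) := mul_le_mul_of_nonneg_left hLP hs
      _ = s / L * (P ^ 2 * L * (L - 1)) := by field_simp
      _ ≤ a * (P ^ 2 * L * (L - 1)) := by gcongr
      _ = a * P ^ 2 * L * (L - 1) := by ring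
  have hgap : a * (P * L) - b / (P * L) - (a * P + b / P) =
      (a * P ^ 2 * L * (L - 1) - b * (L + 1)) / (P * L) := by
    field_simp; ring
  rw [← sub_nonneg, hgap]
  exact div_nonneg (by linarith) (by positivity)

lemma mul_add_one_le_pow_sq_mul_sub_one {L : ℝ} {n : ℕ} (hn : 0 < n) (hL : 1 < L)
    (h : (L + 1) / (L - 1) ≤ L ^ (2 * n - 1)) :
    L * (L + 1) ≤ (L ^ n) ^ 2 * (L - 1) := by
  have hL0 : 0 < L := by linarith
  rw [div_le_iff₀ (by linarith)] at h
  calc L * (L + 1) ≤ L * (L ^ (2 * n - 1) * (L - 1)) := by gcongr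
    _ = L ^ (2 * n - 1 + 1) * (L - 1) := by ring
    _ = (L ^ n) ^ 2 * (L - 1) := by rw [← pow_mul]; congr 2; omega

theorem norm_add_zpow_neg_le_succ {𝕜 : Type*} [NormedDivisionRing 𝕜] {A B l : 𝕜} {s : ℝ}
    (n : ℤ) (hl : 1 < ‖l‖) (hs : 0 ≤ s) (hA : s / ‖l‖ ≤ ‖A‖) (hB : ‖B‖ ≤ s * ‖l‖)
    (hpow : ‖l‖ * (‖l‖ + 1) ≤ (‖l‖ ^ n) ^ 2 * (‖l‖ - 1)) :
    ‖A * l ^ n + B * l ^ (-n)‖ ≤ ‖A * l ^ (n + 1) + B * l ^ (-(n + 1))‖ := by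
  have hL0 : ‖l‖ ≠ 0 := by positivity
  have hupper : ‖A * l ^ n + B * l ^ (-n)‖ ≤ ‖A‖ * ‖l‖ ^ n + ‖B‖ / ‖l‖ ^ n := by
    simpa [norm_zpow, zpow_neg, div_eq_mul_inv] using norm_add_le (A * l ^ n) (B * l ^ (-n))
  have hlower : ‖A‖ * (‖l‖ ^ n * ‖l‖) - ‖B‖ / (‖l‖ ^ n * ‖l‖) ≤
      ‖A * l ^ (n + 1) + B * l ^ (-(n + 1))‖ := by
    have hnorm : ‖l ^ (-(n + 1))‖ = (‖l‖ ^ n * ‖l‖)⁻¹ := by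
      rw [norm_zpow, zpow_neg, zpow_add_one₀ hL0]
    have h := norm_sub_norm_le (A * l ^ (n + 1)) (-(B * l ^ (-(n + 1))))
    rwa [sub_neg_eq_add, norm_neg, norm_mul, norm_mul, hnorm, norm_zpow, zpow_add_one₀ hL0,
      ← div_eq_mul_inv] at h
  have hbal := add_div_le_sub_div_of_balanced hl hs (by positivity) hA hB hpow
  linarith

theorem eventual_growth_general (A B l : ℂ) (n : ℕ) (hn : 0 < n)
    (habs : 1 < ‖l‖)
    (hA1 : Real.sqrt (‖A * B‖) / ‖l‖ ≤ ‖A‖)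
    (hA2 : ‖A‖ ≤ Real.sqrt (‖A * B‖) * ‖l‖)
    (hB1 : Real.sqrt (‖A * B‖) / ‖l‖ ≤ ‖B‖)
    (hB2 : ‖B‖ ≤ Real.sqrt (‖A * B‖) * ‖l‖)
    (hpow : (‖l‖ + 1) / (‖l‖ - 1) ≤
      (‖l‖) ^ (2 * n - 1)) :
    ‖A * l ^ (n : ℤ) + B * l ^ (-(n : ℤ))‖ ≤
      ‖A * l ^ ((n : ℤ) + 1) + B * l ^ (-((n : ℤ) + 1))‖ ∧
    ‖A * l ^ (-(n : ℤ)) + B * l ^ (n : ℤ)‖ ≤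
      ‖A * l ^ (-(n : ℤ) - 1) + B * l ^ ((n : ℤ) + 1)‖ := by
  have hpow' := mul_add_one_le_pow_sq_mul_sub_one hn habs hpow
  rw [← zpow_natCast] at hpow'
  have hs := Real.sqrt_nonneg ‖A * B‖
  refine ⟨norm_add_zpow_neg_le_succ n habs hs hA1 hB2 hpow', ?_⟩
  -- `y₋ₙ` for `(A, B)` is `yₙ` for `(B, A)`
  rw [add_comm (A * _), add_comm (A * _), neg_sub_left, add_comm 1]
  exact norm_add_zpow_neg_le_succ n habs hs hB1 hA2 hpow'

theorem eventual_growth (x A B l : ℂ) (n : ℕ) (hn : 0 < n)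
    (hl : l = (x / 2) * (1 + csqrt (1 - 4 / x ^ 2)))
    (habs : 1 < ‖l‖)
    (hA1 : Real.sqrt (‖A * B‖) / ‖l‖ ≤ ‖A‖)
    (hA2 : ‖A‖ ≤ Real.sqrt (‖A * B‖) * ‖l‖)
    (hB1 : Real.sqrt (‖A * B‖) / ‖l‖ ≤ ‖B‖)
    (hB2 : ‖B‖ ≤ Real.sqrt (‖A * B‖) * ‖l‖)
    (hpow : (‖l‖ + 1) / (‖l‖ - 1) ≤
      (‖l‖) ^ (2 * n - 1)) :
    ‖A * l ^ (n : ℤ) + B * l ^ (-(n : ℤ))‖ ≤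
      ‖A * l ^ ((n : ℤ) + 1) + B * l ^ (-((n : ℤ) + 1))‖ ∧
    ‖A * l ^ (-(n : ℤ)) + B * l ^ (n : ℤ)‖ ≤
      ‖A * l ^ (-(n : ℤ) - 1) + B * l ^ ((n : ℤ) + 1)‖ :=
  eventual_growth_general A B l n hn habs hA1 hA2 hB1 hB2 hpow
end

section
/- Let ã, b̃, c̃, p̃, q̃, r̃ ∈ ℂ and γ ∈ ℂ satisfy the hyperbolic cosine rules cosh r̃ = cosh ã cosh b̃ + sinh ã sinh b̃ cosh γ and cosh 2c̃ = cosh 2ã cosh 2b̃ + sinh 2ã sinh 2b̃ cosh γ. Then (2cosh ã)(2cosh b̃)(2cosh r̃) = (2cosh ã)² + (2cosh b̃)² + (2cosh c̃)² - 4. -/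
theorem hexagon_cosine_rules_identity (a b c r γ : ℂ)
    (h1 : Complex.cosh r =
      Complex.cosh a * Complex.cosh b +
        Complex.sinh a * Complex.sinh b * Complex.cosh γ)
    (h2 : Complex.cosh (2 * c) =
      Complex.cosh (2 * a) * Complex.cosh (2 * b) +
        Complex.sinh (2 * a) * Complex.sinh (2 * b) * Complex.cosh γ) :
    (2 * Complex.cosh a) * (2 * Complex.cosh b) * (2 * Complex.cosh r) =
      (2 * Complex.cosh a) ^ 2 + (2 * Complex.cosh b) ^ 2 +
        (2 * Complex.cosh c) ^ 2 - 4 := by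
  rw [Complex.cosh_two_mul, Complex.cosh_two_mul, Complex.cosh_two_mul,
    Complex.sinh_two_mul, Complex.sinh_two_mul] at h2
  simp only [Complex.sinh_sq] at h2
  linear_combination (8 * Complex.cosh a * Complex.cosh b) * h1 - 2 * h2
end
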